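/- arXiv:cs/0301010 — 2 statements merged into one kernel-verified Lean document; each statement's English description precedes it below -/
import Mathlib

section
/- For any propositional disjunctive logic program P, D-WFS*(P) = D-WFS*(res*(P)), i.e., P is equivalent to its strong residual program under the semantics D-WFS*. -/
open scoped Classical

namespace DLP

/-- A (propositional) rule `a₁ ∨ ⋯ ∨ aₙ ← b₁, …, bₘ, not c₁, …, not cₜ`,
with head atoms `head`, positive body atoms `bodyPos` and (default-)negated
body atoms `bodyNeg` (heads and bodies are sets of literals). -/
structure Rule (Atom : Type) where
  head : Finset Atom
  bodyPos : Finset Atom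
  bodyNeg : Finset Atom

/-- A pure disjunction: a (positive) disjunction of atoms, or a (negative)
disjunction of default-negated atoms. -/
inductive PDisj (Atom : Type) where
  | pos : Finset Atom → PDisj Atom
  | neg : Finset Atom → PDisj Atom

/-- The atoms occurring in a pure disjunction. -/
def PDisj.atomsOf {Atom : Type} : PDisj Atom → Finset Atom
  | .pos A => A
  | .neg A => A

/-- Sub-disjunction relation between pure disjunctions (same polarity). -/
def SubDisj {Atom : Type} : PDisj Atom → PDisj Atom → Prop
  | .pos A, .pos B => A ⊆ B
  | .neg A, .neg B => A ⊆ B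
  | .pos _, .neg _ => False
  | .neg _, .pos _ => False

/-- A disjunctive logic program: a set of rules (over a finite atom alphabet,
so every program is finite). -/
abbrev Program (Atom : Type) := Set (Rule Atom)

variable {Atom : Type} [Fintype Atom] [DecidableEq Atom]

/-- Well-formedness: every rule head is nonempty (n > 0). -/
def IsProgram (P : Program Atom) : Prop := ∀ r ∈ P, r.head.Nonempty

/-- The atoms occurring in rule heads of `P`. -/
def heads (P : Program Atom) : Set Atom := {a | ∃ r ∈ P, a ∈ r.head}

/-- Closure of a set of pure disjunctions under super-disjunctions
(model states are assumed closed under implication of pure disjunctions). -/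
def stClosure (S : Set (PDisj Atom)) : Set (PDisj Atom) := {d' | ∃ d ∈ S, SubDisj d d'}

/-- A model state: a set of (nonempty) pure disjunctions closed under
super-disjunctions. -/
def IsModelState (S : Set (PDisj Atom)) : Prop :=
  (∀ d ∈ S, (PDisj.atomsOf d).Nonempty) ∧ ∀ d ∈ S, ∀ d', SubDisj d d' → d' ∈ S

/-- Consistency of a model state. -/
def ConsistentState (S : Set (PDisj Atom)) : Prop :=
  (¬ ∃ A : Finset Atom, A.Nonempty ∧ PDisj.pos A ∈ S ∧ ∀ a ∈ A, PDisj.neg {a} ∈ S) ∧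
  (¬ ∃ A : Finset Atom, A.Nonempty ∧ PDisj.neg A ∈ S ∧ ∀ a ∈ A, PDisj.pos {a} ∈ S)

/-! ### Classical inference for (positive) programs -/

/-- An interpretation `I` satisfies a rule (read classically). -/
def SatisfiesRule (I : Set Atom) (r : Rule Atom) : Prop :=
  ((↑r.bodyPos : Set Atom) ⊆ I ∧ ∀ c ∈ r.bodyNeg, c ∉ I) → ∃ a ∈ r.head, a ∈ I

/-- Classical propositional entailment of a positive disjunction from a program. -/
def Entails (P : Program Atom) (A : Finset Atom) : Prop :=
  ∀ I : Set Atom, (∀ r ∈ P, SatisfiesRule I r) → ∃ a ∈ A, a ∈ I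

/-- The least model state of a positive program: all entailed positive disjunctions. -/
def msState (P : Program Atom) : Set (Finset Atom) := {A | A.Nonempty ∧ Entails P A}

/-- Canonical form: the minimal disjunctions of `S`. -/
def canonical (S : Set (Finset Atom)) : Set (Finset Atom) := {A | A ∈ S ∧ ¬ ∃ A' ∈ S, A' ⊂ A}

/-! ### Argumentation: hypotheses, support, attack, WFDS -/

/-- A hypothesis: a set of (nonempty) negative disjunctions, each represented
by its finite set of atoms. -/
def IsHyp (Δ : Set (Finset Atom)) : Prop := ∀ D ∈ Δ, D.Nonempty

/-- The reduct `P⁺_Δ` of `P` with respect to a hypothesis `Δ`. -/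
def reduct (P : Program Atom) (Δ : Set (Finset Atom)) : Program Atom :=
  {r' | ∃ r ∈ P, (∀ c ∈ r.bodyNeg, ({c} : Finset Atom) ∈ Δ) ∧
    r' = ⟨r.head, r.bodyPos, ∅⟩}

/-- `Δ ⊢_P A`: `Δ` is a supporting hypothesis for the positive disjunction `A`. -/
def Supports (P : Program Atom) (Δ : Set (Finset Atom)) (A : Finset Atom) : Prop :=
  ∃ B : Finset Atom, (∀ b ∈ B, ({b} : Finset Atom) ∈ Δ) ∧
    A ∪ B ∈ canonical (msState (reduct P Δ))

/-- Attack relation, parameterized by a support relation `sup`. -/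
def AttacksWith (sup : Set (Finset Atom) → Finset Atom → Prop)
    (Δ Δ' : Set (Finset Atom)) : Prop :=
  (∃ β ∈ Δ', β.Nonempty ∧ ∀ b ∈ β, sup Δ {b}) ∨
  (∃ B : Finset Atom, B.Nonempty ∧ (∀ b ∈ B, ({b} : Finset Atom) ∈ Δ') ∧ sup Δ B)

/-- The assumption `not a` is admissible with respect to `Δ`. -/
def AdmissibleWith (sup : Set (Finset Atom) → Finset Atom → Prop)
    (Δ : Set (Finset Atom)) (a : Atom) : Prop :=
  ∀ Δ' : Set (Finset Atom), IsHyp Δ' →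
    AttacksWith sup Δ' {({a} : Finset Atom)} → AttacksWith sup Δ Δ'

/-- The operator `A_P`. -/
def AOpWith (sup : Set (Finset Atom) → Finset Atom → Prop)
    (Δ : Set (Finset Atom)) : Set (Finset Atom) :=
  {D | D.Nonempty ∧ ∃ a ∈ D, AdmissibleWith sup Δ a}

/-- The well-founded disjunctive hypothesis: least fixpoint of `A_P`
(obtained by iteration from the empty hypothesis). -/
def WFDHWith (sup : Set (Finset Atom) → Finset Atom → Prop) : Set (Finset Atom) :=
  ⋃ k : ℕ, (AOpWith sup)^[k] ∅

/-- The induced well-founded model state `WFDH ∪ cons(WFDH)`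
(closed under super-disjunctions). -/
def WFDSWith (sup : Set (Finset Atom) → Finset Atom → Prop) : Set (PDisj Atom) :=
  stClosure ({d | ∃ D ∈ WFDHWith sup, d = PDisj.neg D} ∪
    {d | ∃ A : Finset Atom, A.Nonempty ∧ sup (WFDHWith sup) A ∧ d = PDisj.pos A})

/-- The attack relation `⇝_P` of `P`. -/
def Attacks (P : Program Atom) : Set (Finset Atom) → Set (Finset Atom) → Prop :=
  AttacksWith (Supports P)

/-- `WFDH(P)`. -/
def WFDH (P : Program Atom) : Set (Finset Atom) := WFDHWith (Supports P)

/-- `WFDS(P)`, the argumentation-based well-founded semantics. -/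
def WFDS (P : Program Atom) : Set (PDisj Atom) := WFDSWith (Supports P)

/-! ### The hyperresolution operator `T^S` and the alternative semantics WFDS' -/

/-- The immediate consequence operator `T_Q^S` of a positive program `Q`. -/
def TS (Q : Program Atom) (J : Set (Finset Atom)) : Set (Finset Atom) :=
  {A | ∃ r ∈ Q, ∃ f : Atom → Finset Atom,
    (∀ b ∈ r.bodyPos, insert b (f b) ∈ J) ∧ A = r.head ∪ r.bodyPos.biUnion f}

/-- `T_Q^S ↑ ω`. -/
def TSomega (Q : Program Atom) : Set (Finset Atom) := ⋃ k : ℕ, (TS Q)^[k] ∅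

/-- `Δ ⊢'_P A`: support via the fixpoint of the hyperresolution operator. -/
def Supports' (P : Program Atom) (Δ : Set (Finset Atom)) (A : Finset Atom) : Prop :=
  ∃ B : Finset Atom, (∀ b ∈ B, ({b} : Finset Atom) ∈ Δ) ∧
    A ∪ B ∈ TSomega (reduct P Δ)

/-- `WFDS'(P)`: as `WFDS(P)` but with `⊢_P` replaced by `⊢'_P` throughout. -/
def WFDS' (P : Program Atom) : Set (PDisj Atom) := WFDSWith (Supports' P)

/-! ### Program transformations -/

/-- `r'` is an implication of `r`. -/
def Implication (r' r : Rule Atom) : Prop :=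
  r.head ⊆ r'.head ∧ r.bodyPos ⊆ r'.bodyPos ∧ r.bodyNeg ⊆ r'.bodyNeg ∧
    (r.head ⊂ r'.head ∨ r.bodyPos ⊂ r'.bodyPos ∨ r.bodyNeg ⊂ r'.bodyNeg)

/-- `r'` is an s-implication of `r`: `r' ≠ r` and either `r'` is an implication of `r`,
or `r` can be obtained from `r'` by changing some negative body literals of `r'`
into head atoms and possibly removing some body literals. -/
def SImplication (r' r : Rule Atom) : Prop :=
  r' ≠ r ∧ (Implication r' r ∨
    ∃ V ⊆ r'.bodyNeg, r.head = r'.head ∪ V ∧ r.bodyPos ⊆ r'.bodyPos ∧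
      r.bodyNeg ⊆ r'.bodyNeg \ V)

/-- Unfolding. -/
def Unfolding (P1 P2 : Program Atom) : Prop :=
  ∃ r ∈ P1, ∃ b ∈ r.bodyPos,
    P2 = (P1 \ {r}) ∪
      {r'' | ∃ r' ∈ P1, b ∈ r'.head ∧
        r'' = ⟨r.head ∪ r'.head.erase b, r.bodyPos.erase b ∪ r'.bodyPos,
               r.bodyNeg ∪ r'.bodyNeg⟩}

/-- Elimination of tautologies. -/
def ElimTaut (P1 P2 : Program Atom) : Prop :=
  ∃ r ∈ P1, (r.head ∩ r.bodyPos).Nonempty ∧ P2 = P1 \ {r}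

/-- Elimination of s-implications. -/
def ElimSImpl (P1 P2 : Program Atom) : Prop :=
  ∃ r' ∈ P1, (∃ r ∈ P1, SImplication r' r) ∧ P2 = P1 \ {r'}

/-- Elimination of nonminimal rules. -/
def ElimNonmin (P1 P2 : Program Atom) : Prop :=
  ∃ r' ∈ P1, (∃ r ∈ P1, r' ≠ r ∧ Implication r' r) ∧ P2 = P1 \ {r'}

/-- Positive reduction. -/
def PosRed (P1 P2 : Program Atom) : Prop :=
  ∃ r ∈ P1, ∃ c ∈ r.bodyNeg, c ∉ heads P1 ∧
    P2 = (P1 \ {r}) ∪ {(⟨r.head, r.bodyPos, r.bodyNeg.erase c⟩ : Rule Atom)}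

/-- Negative reduction. -/
def NegRed (P1 P2 : Program Atom) : Prop :=
  ∃ r ∈ P1, (∃ r' ∈ P1, r'.bodyPos = ∅ ∧ r'.bodyNeg = ∅ ∧ r'.head ⊆ r.bodyNeg) ∧
    P2 = P1 \ {r}

/-! ### BD-semantics and the transformation-based semantics -/

/-- An (abstract) BD-semantics. -/
structure BDSemantics (Atom : Type) [Fintype Atom] [DecidableEq Atom] where
  sem : Program Atom → Set (PDisj Atom)
  nonempty_mem : ∀ P : Program Atom, IsProgram P → ∀ d ∈ sem P, (PDisj.atomsOf d).Nonempty
  closed : ∀ P : Program Atom, IsProgram P → ∀ d ∈ sem P, ∀ d', SubDisj d d' → d' ∈ sem P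
  fact_mem : ∀ P : Program Atom, IsProgram P → ∀ r ∈ P, r.bodyPos = ∅ → r.bodyNeg = ∅ →
    PDisj.pos r.head ∈ sem P
  neg_mem : ∀ P : Program Atom, IsProgram P → ∀ a : Atom, a ∉ heads P →
    PDisj.neg {a} ∈ sem P

/-- A BD-semantics `S` allows (is invariant under) a program transformation `T`. -/
def Allows (S : BDSemantics Atom) (T : Program Atom → Program Atom → Prop) : Prop :=
  ∀ P1 P2 : Program Atom, IsProgram P1 → IsProgram P2 → T P1 P2 → S.sem P1 = S.sem P2

/-- `S` allows all program transformations in `T*_WFS`. -/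
def AllowsStar (S : BDSemantics Atom) : Prop :=
  Allows S Unfolding ∧ Allows S ElimTaut ∧ Allows S ElimSImpl ∧
    Allows S PosRed ∧ Allows S NegRed

/-- `S` allows all program transformations in `T_WFS`. -/
def AllowsWFSset (S : BDSemantics Atom) : Prop :=
  Allows S Unfolding ∧ Allows S ElimTaut ∧ Allows S ElimNonmin ∧
    Allows S PosRed ∧ Allows S NegRed

/-- `D-WFS*`: the weakest BD-semantics allowing all transformations in `T*_WFS`. -/
def DWFSstar (P : Program Atom) : Set (PDisj Atom) :=
  ⋂ S ∈ {S : BDSemantics Atom | AllowsStar S}, S.sem P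

/-- `D-WFS`: the weakest BD-semantics allowing all transformations in `T_WFS`. -/
def DWFS (P : Program Atom) : Set (PDisj Atom) :=
  ⋂ S ∈ {S : BDSemantics Atom | AllowsWFSset S}, S.sem P

/-! ### The least fixpoint transformation and the strong residual program -/

/-- The generalized consequence operator `T_P^G` on sets of conditional facts. -/
def TG (P : Program Atom) (J : Set (Rule Atom)) : Set (Rule Atom) :=
  {C | ∃ r ∈ P, ∃ hf : Atom → Finset Atom, ∃ bf : Atom → Finset Atom,
    (∀ b ∈ r.bodyPos, (⟨insert b (hf b), ∅, bf b⟩ : Rule Atom) ∈ J) ∧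
    C = ⟨r.head ∪ r.bodyPos.biUnion hf, ∅, r.bodyNeg ∪ r.bodyPos.biUnion bf⟩}

/-- The least fixpoint transformation `Lft(P) = T_P^G ↑ ω`, a negative program. -/
def Lft (P : Program Atom) : Program Atom := ⋃ k : ℕ, (TG P)^[k] ∅

/-- The strong reduction operator `R*` on negative programs. -/
noncomputable def Rstar (N : Program Atom) : Program Atom :=
  {r' | ∃ r ∈ N, (¬ ∃ r'' ∈ N, SImplication r r'') ∧
    r' = ⟨r.head, r.bodyPos, r.bodyNeg.filter (fun c => c ∈ heads N)⟩}

/-- The strong residual program `res*(P)`: the fixpoint reached by iterating `R*`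
starting from `Lft(P)`. -/
noncomputable def resStar (P : Program Atom) : Program Atom :=
  if h : ∃ k : ℕ, Rstar ((Rstar (Atom := Atom))^[k] (Lft P)) = (Rstar (Atom := Atom))^[k] (Lft P)
  then (Rstar (Atom := Atom))^[Nat.find h] (Lft P)
  else ∅

/-! ### Unfounded sets -/

/-- `body(r)` is true with respect to the model state `S`. -/
def BodyTrue (S : Set (PDisj Atom)) (r : Rule Atom) : Prop :=
  (∀ b ∈ r.bodyPos, PDisj.pos {b} ∈ S) ∧ (∀ c ∈ r.bodyNeg, PDisj.neg {c} ∈ S)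

/-- `body(r)` is false with respect to the model state `S`. -/
def BodyFalse (S : Set (PDisj Atom)) (r : Rule Atom) : Prop :=
  (∃ b ∈ r.bodyPos, PDisj.neg {b} ∈ S) ∨ (∃ c ∈ r.bodyNeg, PDisj.pos {c} ∈ S) ∨
  (∃ A : Finset Atom, A.Nonempty ∧ A ⊆ r.bodyNeg ∧ PDisj.pos A ∈ S)

/-- `X` is an unfounded set for `P` with respect to the model state `S`. -/
def Unfounded (P : Program Atom) (S : Set (PDisj Atom)) (X : Set Atom) : Prop :=
  ∀ a ∈ X, ∀ r ∈ P, a ∈ r.head →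
    BodyFalse S r ∨ (∃ x ∈ X, x ∈ r.bodyPos) ∨
    (BodyTrue S r → ∃ A : Finset Atom, A.Nonempty ∧ (↑A : Set Atom) ⊆ (↑r.head : Set Atom) \ X ∧
      PDisj.pos A ∈ S)

/-- The candidate greatest unfounded set: the union of all unfounded sets
(it is the greatest unfounded set exactly when it is itself unfounded). -/
def UP (P : Program Atom) (S : Set (PDisj Atom)) : Set Atom := ⋃₀ {X | Unfounded P S X}

/-- The operator `T_P` on model states. -/
def TPop (P : Program Atom) (S : Set (PDisj Atom)) : Set (Finset Atom) :=
  {A | A.Nonempty ∧ ∃ r ∈ P, BodyTrue S r ∧ A ⊆ r.head ∧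
    ∀ a ∈ r.head, a ∉ A → PDisj.neg {a} ∈ S}

/-- The operator `W_P(S) = T_P(S) ∪ not.U_P(S)`. -/
def WP (P : Program Atom) (S : Set (PDisj Atom)) : Set (PDisj Atom) :=
  {d | ∃ A ∈ TPop P S, d = PDisj.pos A} ∪ {d | ∃ p ∈ UP P S, d = PDisj.neg ({p} : Finset Atom)}

/-- The sequence `W_0 = ∅`, `W_k = W_P(W_{k-1})`. -/
def Wseq (P : Program Atom) (k : ℕ) : Set (PDisj Atom) := (WP P)^[k] ∅

/-- `U-WFS(P)`: the least fixpoint of `W_P` (closed under super-disjunctions). -/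
def UWFS (P : Program Atom) : Set (PDisj Atom) := stClosure (⋃ k : ℕ, Wseq P k)

end DLP

/-!
As `D-WFS*` is an intersection, it suffices that every BD-semantics `S` allowing `T*_WFS`
satisfies `S(P) = S(res*(P))`. This is shown in three stages.

First, `S(P) = S(P ∪ Lft(P))`: the conditional facts of `Lft(P)` are added stage by stage.
A hyperresolvent in whose head some premise atom survives is an s-implication of that premise;
otherwise unfolding its generating rule on a premise atom leaves it derivable from a rule with
fewer positive body atoms.

Second, `S(P ∪ Lft(P)) = S(Lft(P))`: the positive body atoms are eliminated one at a time by
unfolding, after deleting the tautologies containing the atom. `Lft(P)` stays closed under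
hyperresolution with every rule produced, so the conditional facts that remain all lie in
`Lft(P)`.

Third, one application of `R*` is an elimination of s-implications followed by positive
reductions, and iterating `R*` terminates because, until the fixpoint, each step strictly
decreases the number of rules plus the number of negative body literals.
-/

lemma Finset.biUnion_eq_union_erase {α β : Type*} [DecidableEq α] [DecidableEq β]
    {s : Finset α} {b : α} (hb : b ∈ s) (f : α → Finset β) :
    s.biUnion f = f b ∪ (s.erase b).biUnion f := by
  rw [← Finset.biUnion_insert, Finset.insert_erase hb]

lemma Finset.biUnion_update_of_mem {α β : Type*} [DecidableEq α] [DecidableEq β]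
    {s : Finset α} {b : α} (hb : b ∈ s) (f : α → Finset β) (X : Finset β) :
    s.biUnion (Function.update f b X) = X ∪ (s.erase b).biUnion f := by
  rw [Finset.biUnion_eq_union_erase hb, Function.update_self]
  congr 1
  exact Finset.biUnion_congr rfl fun c hc => Function.update_of_ne (Finset.ne_of_mem_erase hc) _ _

lemma Set.eq_of_forall_insert_eq {α β : Type*} [Finite α] (f : Set α → β) {A B : Set α}
    (hAB : A ⊆ B) (h : ∀ Q, A ⊆ Q → Q ⊆ B → ∀ x ∈ B, f (insert x Q) = f Q) : f A = f B := by
  suffices hsub : f (A ∪ B) = f A by rwa [Set.union_eq_self_of_subset_left hAB, eq_comm] at hsub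
  refine Set.Finite.induction_on_subset (motive := fun t _ => f (A ∪ t) = f A) B B.toFinite
    (by rw [Set.union_empty]) fun {a t} haB htB _ ih => ?_
  rw [Set.union_insert, h _ Set.subset_union_left (Set.union_subset hAB htB) a haB, ih]

namespace DLP

attribute [ext] Rule

variable {Atom : Type}

lemma IsProgram.mono {Q Q' : Program Atom} (hQ : IsProgram Q) (h : Q' ⊆ Q) : IsProgram Q' :=
  fun r hr => hQ r (h hr)

lemma IsProgram.union {Q Q' : Program Atom} (hQ : IsProgram Q) (hQ' : IsProgram Q') :
    IsProgram (Q ∪ Q') := by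
  rintro r (hr | hr)
  exacts [hQ r hr, hQ' r hr]

lemma heads_mono {Q Q' : Program Atom} (h : Q' ⊆ Q) : heads Q' ⊆ heads Q := by
  rintro a ⟨r, hr, ha⟩
  exact ⟨r, h hr, ha⟩

instance [Fintype Atom] : Fintype (Rule Atom) :=
  Fintype.ofEquiv (Finset Atom × Finset Atom × Finset Atom)
    ⟨fun p => ⟨p.1, p.2.1, p.2.2⟩, fun r => (r.head, r.bodyPos, r.bodyNeg), fun _ => rfl,
      fun _ => rfl⟩

section RuleOperations

variable [DecidableEq Atom]

namespace Rule

def resolvent (r r' : Rule Atom) (b : Atom) : Rule Atom :=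
  ⟨r.head ∪ r'.head.erase b, r.bodyPos.erase b ∪ r'.bodyPos, r.bodyNeg ∪ r'.bodyNeg⟩

/-- The conditional fact that `T_P^G` derives from `r` when every `b ∈ body⁺(r)` is resolved
against the conditional fact `b ∨ hf b ← not (bf b)`. -/
def hyperres (r : Rule Atom) (hf bf : Atom → Finset Atom) : Rule Atom :=
  ⟨r.head ∪ r.bodyPos.biUnion hf, ∅, r.bodyNeg ∪ r.bodyPos.biUnion bf⟩

def dropNeg (D : Finset Atom) (r : Rule Atom) : Rule Atom :=
  ⟨r.head, r.bodyPos, r.bodyNeg \ D⟩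

end Rule

def unfold (Q : Program Atom) (r : Rule Atom) (b : Atom) : Program Atom :=
  (Q \ {r}) ∪ {x | ∃ r' ∈ Q, b ∈ r'.head ∧ x = r.resolvent r' b}

lemma IsProgram.unfold {Q : Program Atom} {r : Rule Atom} (hQ : IsProgram Q) (hr : r ∈ Q)
    (b : Atom) : IsProgram (unfold Q r b) := by
  refine (hQ.mono Set.sdiff_subset).union ?_
  rintro _ ⟨r', -, -, rfl⟩
  exact (hQ r hr).mono Finset.subset_union_left

lemma IsProgram.insert_hyperres {Q : Program Atom} {r : Rule Atom} (hQ : IsProgram Q)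
    (hr : r ∈ Q) (hf bf : Atom → Finset Atom) : IsProgram (insert (r.hyperres hf bf) Q) := by
  rintro x (rfl | hx)
  exacts [(hQ r hr).mono Finset.subset_union_left, hQ x hx]

end RuleOperations

section Transformations

variable [Fintype Atom] [DecidableEq Atom] {S : BDSemantics Atom} (hS : AllowsStar S)
  {Q : Program Atom} (hQ : IsProgram Q)
include hS hQ

lemma sem_eq_unfold {r : Rule Atom} {b : Atom} (hr : r ∈ Q) (hb : b ∈ r.bodyPos) :
    S.sem Q = S.sem (unfold Q r b) :=
  hS.1 _ _ hQ (hQ.unfold hr b) ⟨r, hr, b, hb, rfl⟩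

lemma sem_eq_sdiff_of_taut {s : Rule Atom} (hs : s ∈ Q) (ht : (s.head ∩ s.bodyPos).Nonempty) :
    S.sem Q = S.sem (Q \ {s}) :=
  hS.2.1 _ _ hQ (hQ.mono Set.sdiff_subset) ⟨s, hs, ht, rfl⟩

lemma sem_eq_sdiff_of_sImplication {s w : Rule Atom} (hs : s ∈ Q) (hw : w ∈ Q)
    (hsw : SImplication s w) : S.sem Q = S.sem (Q \ {s}) :=
  hS.2.2.1 _ _ hQ (hQ.mono Set.sdiff_subset) ⟨s, hs, ⟨w, hw, hsw⟩, rfl⟩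

lemma sem_eq_posRed {r : Rule Atom} {c : Atom} (hr : r ∈ Q) (hc : c ∈ r.bodyNeg)
    (hcQ : c ∉ heads Q) : S.sem Q = S.sem (insert (r.dropNeg {c}) (Q \ {r})) := by
  have hdrop : r.dropNeg {c} = ⟨r.head, r.bodyPos, r.bodyNeg.erase c⟩ := by
    simp [Rule.dropNeg, Finset.sdiff_singleton_eq_erase]
  rw [Set.insert_eq, Set.union_comm, hdrop]
  refine hS.2.2.2.1 _ _ hQ ?_ ⟨r, hr, c, hc, hcQ, rfl⟩
  refine (hQ.mono Set.sdiff_subset).union ?_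
  rintro _ rfl
  exact hQ r hr

end Transformations

def Rule.rank (r : Rule Atom) : ℕ :=
  2 * r.bodyNeg.card + r.head.card + r.bodyPos.card

lemma Rule.rank_lt_of_le_of_ne {w s : Rule Atom} (hh : w.head ⊆ s.head)
    (hp : w.bodyPos ⊆ s.bodyPos) (hn : w.bodyNeg ⊆ s.bodyNeg) (hne : w ≠ s) :
    w.rank < s.rank := by
  have := Finset.card_le_card hh
  have := Finset.card_le_card hp
  have := Finset.card_le_card hn
  by_contra hle
  refine hne (Rule.ext (Finset.eq_of_subset_of_card_le hh ?_)
    (Finset.eq_of_subset_of_card_le hp ?_) (Finset.eq_of_subset_of_card_le hn ?_)) <;>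
  · unfold Rule.rank at hle
    omega

section StrongReduction

variable [DecidableEq Atom]

/-- Turning the negative literals `V` into head atoms adds at most `|V|` head atoms but removes
`|V|` negative literals, which the factor `2` in `Rule.rank` outweighs. -/
lemma Rule.rank_lt_of_sImplication {s w : Rule Atom} (h : SImplication s w) :
    w.rank < s.rank := by
  obtain ⟨hne, ⟨hh, hp, hn, -⟩ | ⟨V, hV, hh, hp, hn⟩⟩ := h
  · exact rank_lt_of_le_of_ne hh hp hn hne.symm
  rcases V.eq_empty_or_nonempty with rfl | hVne
  · rw [Finset.union_empty] at hh
    rw [Finset.sdiff_empty] at hn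
    exact rank_lt_of_le_of_ne hh.le hp hn hne.symm
  have hhead : w.head.card ≤ s.head.card + V.card := hh ▸ Finset.card_union_le s.head V
  have hneg : w.bodyNeg.card ≤ s.bodyNeg.card - V.card :=
    Finset.card_sdiff_of_subset hV ▸ Finset.card_le_card hn
  have := Finset.card_le_card hV
  have := Finset.card_le_card hp
  have := Finset.card_pos.2 hVne
  unfold rank
  omega

lemma Rule.dropNeg_dropNeg (D D' : Finset Atom) (r : Rule Atom) :
    (r.dropNeg D').dropNeg D = r.dropNeg (D' ∪ D) := by
  ext1 <;> simp [Rule.dropNeg, sdiff_sdiff_left]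

lemma Rule.dropNeg_empty : Rule.dropNeg (∅ : Finset Atom) = id := by
  funext r
  ext1 <;> simp [Rule.dropNeg]

lemma heads_image_dropNeg (D : Finset Atom) (Q : Program Atom) :
    heads (Rule.dropNeg D '' Q) = heads Q := by
  ext a
  simp [heads, Rule.dropNeg]

lemma IsProgram.image_dropNeg {Q : Program Atom} (hQ : IsProgram Q) (D : Finset Atom) :
    IsProgram (Rule.dropNeg D '' Q) := by
  rintro _ ⟨r, hr, rfl⟩
  exact hQ r hr

lemma IsProgram.Rstar {N : Program Atom} (hN : IsProgram N) : IsProgram (Rstar N) := by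
  rintro _ ⟨r, hr, -, rfl⟩
  exact hN r hr

variable [Fintype Atom]

lemma Rstar_eq_image (N : Program Atom) :
    Rstar N = Rule.dropNeg {c | c ∉ heads N} '' {r | r ∈ N ∧ ¬ ∃ w ∈ N, SImplication r w} := by
  ext r'
  constructor
  · rintro ⟨r, hr, hns, rfl⟩
    refine ⟨r, ⟨hr, hns⟩, ?_⟩
    ext1 <;> simp [Rule.dropNeg, Finset.ext_iff]
  · rintro ⟨r, ⟨hr, hns⟩, rfl⟩
    refine ⟨r, hr, hns, ?_⟩
    ext1 <;> simp [Rule.dropNeg, Finset.ext_iff]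

noncomputable def negWeight (N : Program Atom) : ℕ :=
  ∑ r ∈ N.toFinset, (r.bodyNeg.card + 1)

lemma negWeight_Rstar_lt {N : Program Atom} (h : Rstar N ≠ N) :
    negWeight (Rstar N) < negWeight N := by
  set M := {r | r ∈ N ∧ ¬ ∃ w ∈ N, SImplication r w}
  set g := Rule.dropNeg (Atom := Atom) {c | c ∉ heads N}
  have hMN : M ⊆ N := fun r hr => hr.1
  have hg_le : ∀ r, (g r).bodyNeg.card ≤ r.bodyNeg.card :=
    fun r => Finset.card_le_card Finset.sdiff_subset
  have h1 : negWeight (Rstar N) ≤ ∑ r ∈ M.toFinset, ((g r).bodyNeg.card + 1) := by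
    rw [negWeight, Rstar_eq_image, Set.toFinset_image]
    exact Finset.sum_image_le_of_nonneg fun _ _ => Nat.zero_le _
  have h2 : ∑ r ∈ M.toFinset, ((g r).bodyNeg.card + 1) ≤ ∑ r ∈ M.toFinset, (r.bodyNeg.card + 1) :=
    Finset.sum_le_sum fun r _ => Nat.add_le_add_right (hg_le r) 1
  have h3 : ∑ r ∈ M.toFinset, (r.bodyNeg.card + 1) ≤ negWeight N :=
    Finset.sum_le_sum_of_subset (Set.toFinset_subset_toFinset.2 hMN)
  by_contra hge
  apply h
  have hM : M = N := by
    refine hMN.antisymm fun r hr => ?_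
    by_contra hrM
    have : ∑ r ∈ M.toFinset, (r.bodyNeg.card + 1) < negWeight N :=
      Finset.sum_lt_sum_of_subset (Set.toFinset_subset_toFinset.2 hMN) (Set.mem_toFinset.2 hr)
        (fun h => hrM (Set.mem_toFinset.1 h)) (Nat.succ_pos _) fun _ _ _ => Nat.zero_le _
    omega
  have hg : ∀ r ∈ M, g r = r := by
    intro r hr
    by_contra hne
    have hlt : (g r).bodyNeg.card < r.bodyNeg.card := by
      refine Finset.card_lt_card (Finset.ssubset_iff_subset_ne.2 ⟨Finset.sdiff_subset, ?_⟩)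
      exact fun h => hne (Rule.ext rfl rfl h)
    have := Finset.sum_lt_sum (fun r _ => Nat.add_le_add_right (hg_le r) 1)
      ⟨r, Set.mem_toFinset.2 hr, Nat.add_lt_add_right hlt 1⟩
    omega
  rw [Rstar_eq_image, Set.image_congr hg, Set.image_id', hM]

lemma exists_Rstar_iterate_fixed (N : Program Atom) :
    ∃ k, Rstar (Rstar^[k] N) = Rstar^[k] N := by
  induction hn : negWeight N using Nat.strong_induction_on generalizing N with
  | _ n ih =>
  by_cases hfix : Rstar N = N
  · exact ⟨0, hfix⟩
  obtain ⟨k, hk⟩ := ih _ (hn ▸ negWeight_Rstar_lt hfix) (Rstar N) rfl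
  exact ⟨k + 1, hk⟩

variable {S : BDSemantics Atom} (hS : AllowsStar S)
include hS

/-- Removing the rules of `K` one at a time, in order of decreasing rank, keeps a witness of
each remaining s-implication in the program. -/
lemma sem_eq_sdiff_of_sImplications {Q K : Program Atom} (hQ : IsProgram Q) (hKQ : K ⊆ Q)
    (hK : ∀ s ∈ K, ∃ w ∈ Q, SImplication s w) : S.sem Q = S.sem (Q \ K) := by
  induction hn : K.ncard using Nat.strong_induction_on generalizing Q K with
  | _ n ih =>
  rcases K.eq_empty_or_nonempty with rfl | hne
  · rw [Set.sdiff_empty]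
  obtain ⟨s, hsK, hmax⟩ := Set.exists_max_image K Rule.rank K.toFinite hne
  obtain ⟨w, hwQ, hsw⟩ := hK s hsK
  have hK' : ∀ s' ∈ K \ {s}, ∃ w ∈ Q \ {s}, SImplication s' w := by
    rintro s' ⟨hs'K, -⟩
    obtain ⟨w', hw'Q, h'⟩ := hK s' hs'K
    refine ⟨w', ⟨hw'Q, ?_⟩, h'⟩
    rintro rfl
    exact (Rule.rank_lt_of_sImplication h').not_ge (hmax s' hs'K)
  calc S.sem Q = S.sem (Q \ {s}) := sem_eq_sdiff_of_sImplication hS hQ (hKQ hsK) hwQ hsw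
    _ = S.sem ((Q \ {s}) \ (K \ {s})) :=
      ih _ (hn ▸ Set.ncard_sdiff_singleton_lt_of_mem hsK) (hQ.mono Set.sdiff_subset)
        (Set.sdiff_subset_sdiff_left hKQ) hK' rfl
    _ = S.sem (Q \ K) := by
      rw [Set.sdiff_sdiff, Set.union_sdiff_cancel (Set.singleton_subset_iff.2 hsK)]

lemma sem_eq_image_dropNeg_singleton {Q : Program Atom} (hQ : IsProgram Q) {c : Atom}
    (hc : c ∉ heads Q) : S.sem Q = S.sem (Rule.dropNeg {c} '' Q) := by
  induction hn : {r | r ∈ Q ∧ c ∈ r.bodyNeg}.ncard using Nat.strong_induction_on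
    generalizing Q with
  | _ n ih =>
  by_cases hex : ∃ r ∈ Q, c ∈ r.bodyNeg
  swap
  · push Not at hex
    have hid : Rule.dropNeg {c} '' Q = Q := by
      refine (Set.image_congr fun r hr => ?_).trans (Set.image_id Q)
      ext1 <;> simp [Rule.dropNeg, hex r hr]
    rw [hid]
  obtain ⟨r, hr, hcr⟩ := hex
  set Q' := insert (r.dropNeg {c}) (Q \ {r})
  have hQ' : IsProgram Q' := by
    rintro x (rfl | hx)
    exacts [hQ r hr, hQ x hx.1]
  have hheads : heads Q' ⊆ heads Q := by
    rintro a ⟨x, (rfl | hx), ha⟩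
    exacts [⟨r, hr, ha⟩, ⟨x, hx.1, ha⟩]
  have hlt : {x | x ∈ Q' ∧ c ∈ x.bodyNeg}.ncard < n := by
    refine hn ▸ Set.ncard_lt_ncard ?_
    refine lt_of_le_of_lt (b := {x | x ∈ Q ∧ c ∈ x.bodyNeg} \ {r}) ?_
      (Set.sdiff_singleton_ssubset.2 ⟨hr, hcr⟩)
    rintro x ⟨(rfl | ⟨hxQ, hxr⟩), hcx⟩
    · simp [Rule.dropNeg] at hcx
    · exact ⟨⟨hxQ, hcx⟩, hxr⟩
  have himage : Rule.dropNeg {c} '' Q' = Rule.dropNeg {c} '' Q := by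
    rw [Set.image_insert_eq, Rule.dropNeg_dropNeg, Finset.union_self, ← Set.image_insert_eq,
      Set.insert_sdiff_singleton, Set.insert_eq_of_mem hr]
  rw [sem_eq_posRed hS hQ hr hcr hc, ih _ hlt hQ' (fun h => hc (hheads h)) rfl, himage]

lemma sem_eq_image_dropNeg {Q : Program Atom} (hQ : IsProgram Q) (D : Finset Atom)
    (hD : ∀ c ∈ D, c ∉ heads Q) : S.sem Q = S.sem (Rule.dropNeg D '' Q) := by
  induction D using Finset.induction_on with
  | empty => rw [Rule.dropNeg_empty, Set.image_id]
  | insert c D _ ih =>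
    rw [ih fun c' hc' => hD c' (Finset.mem_insert_of_mem hc'),
      sem_eq_image_dropNeg_singleton hS (hQ.image_dropNeg D)
        (heads_image_dropNeg D Q ▸ hD c (Finset.mem_insert_self c D)),
      Set.image_image]
    simp only [Rule.dropNeg_dropNeg, Finset.union_comm D, ← Finset.insert_eq]

lemma sem_eq_Rstar {N : Program Atom} (hN : IsProgram N) : S.sem N = S.sem (Rstar N) := by
  set K := {r | r ∈ N ∧ ∃ w ∈ N, SImplication r w}
  have hM : N \ K = {r | r ∈ N ∧ ¬ ∃ w ∈ N, SImplication r w} := by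
    ext r
    simp [K]
  rw [sem_eq_sdiff_of_sImplications hS hN (fun r (hr : r ∈ K) => hr.1) (fun r hr => hr.2), hM,
    Rstar_eq_image]
  refine sem_eq_image_dropNeg hS (hN.mono fun r hr => hr.1) _ fun c hc hcM => ?_
  simp only [Finset.mem_filter, Finset.mem_univ, true_and] at hc
  exact hc (heads_mono (fun r hr => hr.1) hcM)

lemma sem_eq_Rstar_iterate {N : Program Atom} (hN : IsProgram N) (k : ℕ) :
    S.sem N = S.sem (Rstar^[k] N) ∧ IsProgram (Rstar^[k] N) := by
  induction k with
  | zero => exact ⟨rfl, hN⟩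
  | succ k ih =>
    rw [Function.iterate_succ_apply']
    exact ⟨ih.1.trans (sem_eq_Rstar hS ih.2), ih.2.Rstar⟩

lemma sem_Lft_eq_resStar {P : Program Atom} (hL : IsProgram (Lft P)) :
    S.sem (Lft P) = S.sem (resStar P) := by
  rw [resStar, dif_pos (exists_Rstar_iterate_fixed (Lft P))]
  exact (sem_eq_Rstar_iterate hS hL _).1

end StrongReduction

section LeastFixpoint

variable [DecidableEq Atom]

lemma Rule.hyperres_of_bodyPos_eq_empty {r : Rule Atom} (h : r.bodyPos = ∅)
    (hf bf : Atom → Finset Atom) : r.hyperres hf bf = r := by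
  ext1 <;> simp [Rule.hyperres, h]

lemma TG_mono (Q : Program Atom) : Monotone (TG Q) := by
  rintro J J' h C ⟨r, hr, hf, bf, hprem, rfl⟩
  exact ⟨r, hr, hf, bf, fun b hb => h (hprem b hb), rfl⟩

lemma monotone_TG_iterate (P : Program Atom) : Monotone fun k => (TG P)^[k] ∅ :=
  Monotone.monotone_iterate_of_le_map (TG_mono P) (Set.empty_subset _)

lemma exists_Lft_eq_iterate [Fintype Atom] (P : Program Atom) : ∃ K, Lft P = (TG P)^[K] ∅ := by
  obtain ⟨K, hK⟩ := WellFoundedGT.monotone_chain_condition ⟨_, monotone_TG_iterate P⟩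
  refine ⟨K, (Set.iUnion_subset fun k => ?_).antisymm
    (Set.subset_iUnion (fun k => (TG P)^[k] ∅) K)⟩
  rcases le_total k K with h | h
  exacts [monotone_TG_iterate P h, (hK k h).ge]

lemma TG_Lft_subset [Fintype Atom] (P : Program Atom) : TG P (Lft P) ⊆ Lft P := by
  obtain ⟨K, hK⟩ := exists_Lft_eq_iterate P
  calc TG P (Lft P) = (TG P)^[K + 1] ∅ := by rw [hK, Function.iterate_succ_apply']
    _ ⊆ Lft P := Set.subset_iUnion (fun k => (TG P)^[k] ∅) (K + 1)

lemma exists_hyperres_of_mem_Lft {P : Program Atom} {C : Rule Atom} (hC : C ∈ Lft P) :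
    ∃ r ∈ P, ∃ hf bf, C = r.hyperres hf bf := by
  obtain ⟨k, hk⟩ := Set.mem_iUnion.1 hC
  cases k with
  | zero => exact absurd hk (Set.notMem_empty C)
  | succ k =>
    rw [Function.iterate_succ_apply'] at hk
    obtain ⟨r, hr, hf, bf, -, rfl⟩ := hk
    exact ⟨r, hr, hf, bf, rfl⟩

lemma bodyPos_of_mem_Lft {P : Program Atom} {C : Rule Atom} (hC : C ∈ Lft P) :
    C.bodyPos = ∅ := by
  obtain ⟨r, -, hf, bf, rfl⟩ := exists_hyperres_of_mem_Lft hC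
  rfl

lemma IsProgram.Lft {P : Program Atom} (hP : IsProgram P) : IsProgram (Lft P) := by
  intro C hC
  obtain ⟨r, hr, hf, bf, rfl⟩ := exists_hyperres_of_mem_Lft hC
  exact (hP r hr).mono Finset.subset_union_left

/-- `T^G_{r}(L) ⊆ L`. -/
def ClosedUnder (L : Program Atom) (r : Rule Atom) : Prop :=
  ∀ hf bf : Atom → Finset Atom,
    (∀ b ∈ r.bodyPos, (⟨insert b (hf b), ∅, bf b⟩ : Rule Atom) ∈ L) → r.hyperres hf bf ∈ L

lemma closedUnder_Lft_of_mem [Fintype Atom] {P : Program Atom} {r : Rule Atom} (hr : r ∈ P) :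
    ClosedUnder (Lft P) r :=
  fun hf bf hprem => TG_Lft_subset P ⟨r, hr, hf, bf, hprem, rfl⟩

lemma closedUnder_of_mem_of_bodyPos_eq_empty {L : Program Atom} {r : Rule Atom} (hr : r ∈ L)
    (h : r.bodyPos = ∅) : ClosedUnder L r :=
  fun hf bf _ => (Rule.hyperres_of_bodyPos_eq_empty h hf bf).symm ▸ hr

lemma ClosedUnder.mem_of_bodyPos_eq_empty {L : Program Atom} {r : Rule Atom}
    (hr : ClosedUnder L r) (h : r.bodyPos = ∅) : r ∈ L :=
  Rule.hyperres_of_bodyPos_eq_empty h (fun _ => ∅) (fun _ => ∅) ▸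
    hr (fun _ => ∅) (fun _ => ∅) (by simp [h])

lemma Rule.insert_inter_hyperres_resolvent {r r' : Rule Atom} {b : Atom} (hbh : b ∈ r'.head)
    (hf bf : Atom → Finset Atom) :
    insert b ((r'.hyperres hf bf).head ∩ ((r.resolvent r' b).hyperres hf bf).head) =
      (r'.hyperres hf bf).head := by
  ext x
  by_cases hx : x = b
  · subst hx
    simp [hyperres, hbh]
  · simp only [hyperres, resolvent, Finset.union_biUnion, Finset.mem_insert, Finset.mem_inter,
      Finset.mem_union, Finset.mem_erase, hx]
    tauto

/-- Resolving `r` on `b` against the instance `C'` of `r'` gives the instance `T` of the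
resolvent; intersecting `C'.head` with `T` keeps `b` in the head exactly when `T` contains it. -/
lemma Rule.hyperres_update_eq_hyperres_resolvent {r r' : Rule Atom} {b : Atom}
    (hb : b ∈ r.bodyPos) (hf bf : Atom → Finset Atom) :
    r.hyperres
        (Function.update hf b
          ((r'.hyperres hf bf).head ∩ ((r.resolvent r' b).hyperres hf bf).head))
        (Function.update bf b (r'.hyperres hf bf).bodyNeg) =
      (r.resolvent r' b).hyperres hf bf := by
  ext1
  · simp only [hyperres, Finset.biUnion_update_of_mem hb]
    ext x
    simp only [resolvent, Finset.union_biUnion, Finset.mem_union, Finset.mem_inter,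
      Finset.mem_erase]
    tauto
  · rfl
  · simp only [hyperres, resolvent, Finset.biUnion_update_of_mem hb, Finset.union_biUnion]
    ext x
    simp only [Finset.mem_union]
    tauto

lemma ClosedUnder.resolvent {L : Program Atom} {r r' : Rule Atom} {b : Atom}
    (hr : ClosedUnder L r) (hr' : ClosedUnder L r') (hb : b ∈ r.bodyPos) (hbh : b ∈ r'.head) :
    ClosedUnder L (r.resolvent r' b) := by
  intro hf bf hprem
  rw [← Rule.hyperres_update_eq_hyperres_resolvent hb hf bf]
  refine hr _ _ fun c hc => ?_
  by_cases hcb : c = b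
  · subst hcb
    rw [Function.update_self, Function.update_self,
      Rule.insert_inter_hyperres_resolvent hbh]
    exact hr' hf bf fun c hc => hprem c (Finset.mem_union_right _ hc)
  · rw [Function.update_of_ne hcb, Function.update_of_ne hcb]
    exact hprem c (Finset.mem_union_left _ (Finset.mem_erase.2 ⟨hcb, hc⟩))

end LeastFixpoint

section AddLft

variable [DecidableEq Atom]

lemma sImplication_of_subset_of_ne {r r' : Rule Atom} (hh : r.head ⊆ r'.head)
    (hp : r.bodyPos ⊆ r'.bodyPos) (hn : r.bodyNeg ⊆ r'.bodyNeg) (hne : r' ≠ r) :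
    SImplication r' r := by
  refine ⟨hne, Or.inl ⟨hh, hp, hn, ?_⟩⟩
  by_contra! hss
  exact hne (Rule.ext ((hh.eq_or_ssubset).resolve_right hss.1).symm
    ((hp.eq_or_ssubset).resolve_right hss.2.1).symm ((hn.eq_or_ssubset).resolve_right hss.2.2).symm)

lemma unfold_insert {Q : Program Atom} {r C : Rule Atom} {b : Atom} (hCr : C ≠ r)
    (hbC : b ∉ C.head) : unfold (insert C Q) r b = insert C (unfold Q r b) := by
  ext x
  simp only [unfold, Set.mem_union, Set.mem_sdiff, Set.mem_insert_iff, Set.mem_singleton_iff,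
    Set.mem_ofPred_eq]
  constructor
  · rintro (⟨rfl | hx, hxr⟩ | ⟨r', rfl | hr', hbr', rfl⟩)
    exacts [Or.inl rfl, Or.inr (Or.inl ⟨hx, hxr⟩), absurd hbr' hbC,
      Or.inr (Or.inr ⟨r', hr', hbr', rfl⟩)]
  · rintro (rfl | ⟨hx, hxr⟩ | ⟨r', hr', hbr', rfl⟩)
    exacts [Or.inl ⟨Or.inl rfl, hCr⟩, Or.inl ⟨Or.inr hx, hxr⟩, Or.inr ⟨r', Or.inr hr', hbr', rfl⟩]

lemma Rule.hyperres_resolvent_premise {r : Rule Atom} {b : Atom} (hb : b ∈ r.bodyPos)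
    {hf bf : Atom → Finset Atom} (hbf : b ∉ hf b) :
    (r.resolvent ⟨insert b (hf b), ∅, bf b⟩ b).hyperres hf bf = r.hyperres hf bf := by
  ext1
  · simp only [Rule.hyperres, Rule.resolvent, Finset.erase_insert hbf, Finset.union_empty,
      Finset.biUnion_eq_union_erase hb hf, Finset.union_assoc]
  · rfl
  · simp only [Rule.hyperres, Rule.resolvent, Finset.union_empty,
      Finset.biUnion_eq_union_erase hb bf, Finset.union_assoc]

lemma Rule.sImplication_hyperres {r : Rule Atom} {b : Atom} (hb : b ∈ r.bodyPos)
    {hf bf : Atom → Finset Atom} (hbC : b ∈ (r.hyperres hf bf).head)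
    (hne : r.hyperres hf bf ≠ ⟨insert b (hf b), ∅, bf b⟩) :
    SImplication (r.hyperres hf bf) ⟨insert b (hf b), ∅, bf b⟩ :=
  sImplication_of_subset_of_ne
    (Finset.insert_subset hbC ((Finset.subset_biUnion_of_mem hf hb).trans
      Finset.subset_union_right))
    (Finset.empty_subset _)
    ((Finset.subset_biUnion_of_mem bf hb).trans Finset.subset_union_right) hne

variable [Fintype Atom] {S : BDSemantics Atom} (hS : AllowsStar S)
include hS

/-- Either some premise atom survives in the head of the hyperresolvent `C`, and then `C` is an
s-implication of that premise, or unfolding `r` on a premise atom `b` leaves `C` untouched and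
produces a rule with one positive body atom less from which `C` is obtained in the same way. -/
lemma sem_insert_hyperres {Q : Program Atom} (hQ : IsProgram Q) {r : Rule Atom} (hr : r ∈ Q)
    {hf bf : Atom → Finset Atom}
    (hprem : ∀ b ∈ r.bodyPos, (⟨insert b (hf b), ∅, bf b⟩ : Rule Atom) ∈ Q) :
    S.sem (insert (r.hyperres hf bf) Q) = S.sem Q := by
  induction hn : r.bodyPos.card generalizing Q r with
  | zero =>
    rw [Rule.hyperres_of_bodyPos_eq_empty (Finset.card_eq_zero.1 hn), Set.insert_eq_of_mem hr]
  | succ n ih =>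
  set C := r.hyperres hf bf
  by_cases hCQ : C ∈ Q
  · rw [Set.insert_eq_of_mem hCQ]
  have hQC : IsProgram (insert C Q) := hQ.insert_hyperres hr hf bf
  by_cases hhit : ∃ b ∈ r.bodyPos, b ∈ C.head
  · obtain ⟨b, hb, hbC⟩ := hhit
    rw [sem_eq_sdiff_of_sImplication hS hQC (Set.mem_insert C Q)
      (Set.mem_insert_of_mem C (hprem b hb))
      (Rule.sImplication_hyperres hb hbC
        fun h => hCQ (h ▸ hprem b hb : r.hyperres hf bf ∈ Q)),
      Set.insert_sdiff_self_of_notMem hCQ]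
  push Not at hhit
  obtain ⟨b, hb⟩ := Finset.card_pos.1 (by omega : 0 < r.bodyPos.card)
  have hne_r : ∀ {x : Rule Atom}, x.bodyPos = ∅ → x ≠ r := by
    intro x hx hxr
    rw [hxr] at hx
    exact Finset.notMem_empty b (hx ▸ hb)
  set ρ := r.resolvent ⟨insert b (hf b), ∅, bf b⟩ b
  have hρ : ρ ∈ unfold Q r b := Or.inr ⟨_, hprem b hb, Finset.mem_insert_self b _, rfl⟩
  have hρC : ρ.hyperres hf bf = C := Rule.hyperres_resolvent_premise hb
    fun h => hhit b hb (Finset.mem_union_right _ (Finset.mem_biUnion.2 ⟨b, hb, h⟩))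
  have hprem' : ∀ c ∈ ρ.bodyPos, (⟨insert c (hf c), ∅, bf c⟩ : Rule Atom) ∈ unfold Q r b := by
    intro c hc
    simp only [ρ, Rule.resolvent, Finset.union_empty] at hc
    exact Or.inl ⟨hprem c (Finset.mem_of_mem_erase hc), hne_r rfl⟩
  have hcard : ρ.bodyPos.card = n := by
    simp [ρ, Rule.resolvent, Finset.card_erase_of_mem hb, hn]
  calc S.sem (insert C Q) = S.sem (unfold (insert C Q) r b) :=
        sem_eq_unfold hS hQC (Set.mem_insert_of_mem C hr) hb
    _ = S.sem (insert C (unfold Q r b)) := by rw [unfold_insert (hne_r rfl) (hhit b hb)]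
    _ = S.sem (unfold Q r b) := hρC ▸ ih (hQ.unfold hr b) hρ hprem' hcard
    _ = S.sem Q := (sem_eq_unfold hS hQ hr hb).symm

lemma sem_union_TG_iterate {P : Program Atom} (hP : IsProgram P) (k : ℕ) :
    S.sem (P ∪ (TG P)^[k] ∅) = S.sem P := by
  induction k with
  | zero => rw [Function.iterate_zero_apply, Set.union_empty]
  | succ k ih =>
    have hstep : (TG P)^[k] ∅ ⊆ (TG P)^[k + 1] ∅ := monotone_TG_iterate P k.le_succ
    refine (Set.eq_of_forall_insert_eq S.sem (Set.union_subset_union_right P hstep)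
      ?_).symm.trans ih
    intro Q hAQ hQB C hC
    have hQ : IsProgram Q :=
      (hP.union (hP.Lft.mono (Set.subset_iUnion (fun k => (TG P)^[k] ∅) (k + 1)))).mono hQB
    rw [Set.mem_union, Function.iterate_succ_apply'] at hC
    rcases hC with hCP | ⟨r, hr, hf, bf, hprem, rfl⟩
    · rw [Set.insert_eq_of_mem (hAQ (Or.inl hCP))]
    · exact sem_insert_hyperres hS hQ (hAQ (Or.inl hr)) fun b hb => hAQ (Or.inr (hprem b hb))

lemma sem_union_Lft {P : Program Atom} (hP : IsProgram P) : S.sem (P ∪ Lft P) = S.sem P := by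
  obtain ⟨K, hK⟩ := exists_Lft_eq_iterate P
  rw [hK]
  exact sem_union_TG_iterate hS hP K

end AddLft

section RemoveRules

variable [DecidableEq Atom]

structure LftInvariant (P Q : Program Atom) : Prop where
  isProgram : IsProgram Q
  Lft_subset : Lft P ⊆ Q
  closedUnder : ∀ r ∈ Q, ClosedUnder (Lft P) r

namespace LftInvariant

variable {P Q : Program Atom}

lemma union_Lft [Fintype Atom] (hP : IsProgram P) : LftInvariant P (P ∪ Lft P) := by
  refine ⟨hP.union hP.Lft, Set.subset_union_right, ?_⟩
  rintro r (hr | hr)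
  exacts [closedUnder_Lft_of_mem hr,
    closedUnder_of_mem_of_bodyPos_eq_empty hr (bodyPos_of_mem_Lft hr)]

lemma sdiff_singleton (h : LftInvariant P Q) {s : Rule Atom} (hs : s.bodyPos.Nonempty) :
    LftInvariant P (Q \ {s}) := by
  refine ⟨h.isProgram.mono Set.sdiff_subset, fun C hC => ⟨h.Lft_subset hC, ?_⟩,
    fun r hr => h.closedUnder r hr.1⟩
  rintro rfl
  exact hs.ne_empty (bodyPos_of_mem_Lft hC)

lemma unfold (h : LftInvariant P Q) {r : Rule Atom} (hr : r ∈ Q) {b : Atom}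
    (hb : b ∈ r.bodyPos) : LftInvariant P (unfold Q r b) := by
  refine ⟨h.isProgram.unfold hr b, fun C hC => Or.inl ⟨h.Lft_subset hC, ?_⟩, ?_⟩
  · rintro rfl
    exact Finset.notMem_empty b (bodyPos_of_mem_Lft hC ▸ hb)
  · rintro x (⟨hx, -⟩ | ⟨r', hr', hbr', rfl⟩)
    exacts [h.closedUnder x hx, (h.closedUnder r hr).resolvent (h.closedUnder r' hr') hb hbr']

lemma eq_Lft (h : LftInvariant P Q) (hQ : ∀ r ∈ Q, r.bodyPos = ∅) : Q = Lft P :=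
  Set.Subset.antisymm (fun r hr => (h.closedUnder r hr).mem_of_bodyPos_eq_empty (hQ r hr))
    h.Lft_subset

end LftInvariant

variable [Fintype Atom] {S : BDSemantics Atom} (hS : AllowsStar S)
include hS

/-- A tautology with `b` in its body is deleted; otherwise unfolding a rule on `b` creates no
new occurrence of `b` in a positive body. -/
lemma exists_step_elim_atom {P Q : Program Atom} (hQ : LftInvariant P Q) {R : Finset Atom}
    (hR : ∀ r ∈ Q, r.bodyPos ⊆ R) {r₀ : Rule Atom} (hr₀ : r₀ ∈ Q) {b : Atom}
    (hb : b ∈ r₀.bodyPos) :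
    ∃ Q', S.sem Q = S.sem Q' ∧ LftInvariant P Q' ∧ (∀ r ∈ Q', r.bodyPos ⊆ R) ∧
      {r | r ∈ Q' ∧ b ∈ r.bodyPos} ⊂ {r | r ∈ Q ∧ b ∈ r.bodyPos} := by
  by_cases htaut : ∃ s ∈ Q, b ∈ s.head ∧ b ∈ s.bodyPos
  · obtain ⟨s, hs, hbh, hbp⟩ := htaut
    refine ⟨Q \ {s}, sem_eq_sdiff_of_taut hS hQ.isProgram hs ⟨b, Finset.mem_inter.2 ⟨hbh, hbp⟩⟩,
      hQ.sdiff_singleton ⟨b, hbp⟩, fun r hr => hR r hr.1, ?_⟩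
    refine lt_of_le_of_lt (b := {r | r ∈ Q ∧ b ∈ r.bodyPos} \ {s}) ?_
      (Set.sdiff_singleton_ssubset.2 ⟨hs, hbp⟩)
    exact fun r hr => ⟨⟨hr.1.1, hr.2⟩, hr.1.2⟩
  push Not at htaut
  refine ⟨unfold Q r₀ b, sem_eq_unfold hS hQ.isProgram hr₀ hb, hQ.unfold hr₀ hb, ?_, ?_⟩
  · rintro x (⟨hx, -⟩ | ⟨r', hr', -, rfl⟩)
    exacts [hR x hx, Finset.union_subset ((Finset.erase_subset _ _).trans (hR r₀ hr₀)) (hR r' hr')]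
  · refine lt_of_le_of_lt (b := {r | r ∈ Q ∧ b ∈ r.bodyPos} \ {r₀}) ?_
      (Set.sdiff_singleton_ssubset.2 ⟨hr₀, hb⟩)
    rintro x ⟨⟨hx, hxr⟩ | ⟨r', hr', hbr', rfl⟩, hbx⟩
    · exact ⟨⟨hx, hbx⟩, hxr⟩
    · rcases Finset.mem_union.1 hbx with h | h
      exacts [absurd h (Finset.notMem_erase b _), absurd h (htaut r' hr' hbr')]

lemma exists_elim_atom {P Q : Program Atom} (hQ : LftInvariant P Q) {R : Finset Atom}
    (hR : ∀ r ∈ Q, r.bodyPos ⊆ R) (b : Atom) :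
    ∃ Q', S.sem Q = S.sem Q' ∧ LftInvariant P Q' ∧ ∀ r ∈ Q', r.bodyPos ⊆ R.erase b := by
  induction hn : {r | r ∈ Q ∧ b ∈ r.bodyPos}.ncard using Nat.strong_induction_on
    generalizing Q with
  | _ n ih =>
  by_cases hex : ∃ r ∈ Q, b ∈ r.bodyPos
  · obtain ⟨r₀, hr₀, hb⟩ := hex
    obtain ⟨Q₁, h₁, hQ₁, hR₁, hlt⟩ := exists_step_elim_atom hS hQ hR hr₀ hb
    obtain ⟨Q', h', hQ', hR'⟩ := ih _ (hn ▸ Set.ncard_lt_ncard hlt) hQ₁ hR₁ rfl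
    exact ⟨Q', h₁.trans h', hQ', hR'⟩
  push Not at hex
  exact ⟨Q, rfl, hQ, fun r hr => Finset.subset_erase.2 ⟨hR r hr, hex r hr⟩⟩

lemma sem_eq_Lft_of_invariant {P Q : Program Atom} (hQ : LftInvariant P Q) (R : Finset Atom)
    (hR : ∀ r ∈ Q, r.bodyPos ⊆ R) : S.sem Q = S.sem (Lft P) := by
  induction R using Finset.induction_on generalizing Q with
  | empty => rw [hQ.eq_Lft fun r hr => Finset.subset_empty.1 (hR r hr)]
  | insert b R hbR ih =>
    obtain ⟨Q', h, hQ', hR'⟩ := exists_elim_atom hS hQ hR b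
    rw [h, ih hQ' fun r hr => Finset.erase_insert hbR ▸ hR' r hr]

lemma sem_eq_resStar {P : Program Atom} (hP : IsProgram P) : S.sem P = S.sem (resStar P) := by
  rw [← sem_union_Lft hS hP, sem_eq_Lft_of_invariant hS (LftInvariant.union_Lft hP) Finset.univ
    fun r _ => Finset.subset_univ _]
  exact sem_Lft_eq_resStar hS hP.Lft

end RemoveRules

/-- For any propositional disjunctive logic program `P`,
`D-WFS*(P) = D-WFS*(res*(P))`: `P` is equivalent to its strong residual program
under the semantics `D-WFS*`. -/
theorem dwfsStar_resStar_eq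
    {Atom : Type} [Fintype Atom] [DecidableEq Atom]
    (P : Program Atom) (hP : IsProgram P) :
    DWFSstar P = DWFSstar (resStar P) :=
  Set.iInter₂_congr fun _ hS => sem_eq_resStar hS hP

end DLP
end

section
/- Let S be a model state of a propositional disjunctive logic program P such that S ∩ X = ∅ for every unfounded set X for P wrt S (no atom of any unfounded set occurs in S). Then the union of any class of unfounded sets for P wrt S is again an unfounded set for P wrt S; consequently P has a greatest unfounded set U_P(S) wrt S. -/
open scoped Classical

namespace DLP

variable {Atom : Type} [Fintype Atom] [DecidableEq Atom]

/-- Let `S` be a model state of `P` such that no atom of any unfounded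
set for `P` wrt `S` occurs in `S`. Then the union of any class of unfounded sets for
`P` wrt `S` is again an unfounded set for `P` wrt `S`; consequently `P` has a
greatest unfounded set wrt `S`. -/
theorem union_unfounded_and_greatest_unfounded
    {Atom : Type} [Fintype Atom] [DecidableEq Atom]
    (P : Program Atom) (hP : IsProgram P)
    (S : Set (PDisj Atom)) (hS : IsModelState S)
    (hdisj : ∀ X : Set Atom, Unfounded P S X → ∀ a ∈ X, ∀ d ∈ S, a ∉ PDisj.atomsOf d) :
    (∀ 𝒞 : Set (Set Atom), (∀ X ∈ 𝒞, Unfounded P S X) → Unfounded P S (⋃₀ 𝒞)) ∧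
    (∃ U : Set Atom, Unfounded P S U ∧ ∀ X : Set Atom, Unfounded P S X → X ⊆ U) := by
  have main : ∀ 𝒞 : Set (Set Atom), (∀ X ∈ 𝒞, Unfounded P S X) → Unfounded P S (⋃₀ 𝒞) := by
    intro 𝒞 h𝒞 a ha r hr har
    obtain ⟨X, hX𝒞, haX⟩ := ha
    have hX := h𝒞 X hX𝒞
    rcases hX a haX r hr har with h | h | h
    · exact Or.inl h
    · obtain ⟨x, hxX, hxb⟩ := h
      exact Or.inr (Or.inl ⟨x, ⟨X, hX𝒞, hxX⟩, hxb⟩)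
    · refine Or.inr (Or.inr (fun hbt => ?_))
      obtain ⟨A, hAne, hAsub, hAS⟩ := h hbt
      refine ⟨A, hAne, ?_, hAS⟩
      intro x hxA
      refine ⟨(hAsub hxA).1, ?_⟩
      rintro ⟨Y, hY𝒞, hxY⟩
      exact hdisj Y (h𝒞 Y hY𝒞) x hxY (PDisj.pos A) hAS hxA
  refine ⟨main, ⟨UP P S, ?_, fun X hX => ?_⟩⟩
  · exact main _ (fun X hX => hX)
  · exact Set.subset_sUnion_of_mem hX

end DLP
end
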